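/- arXiv:1702.02708 — 4 statements merged into one kernel-verified Lean document; each statement's English description precedes it below -/
import Mathlib

section
/- Let Y and C be independent real random variables with continuous CDFs, let Y* = min(Y,C) and δ = 1{Y ≤ C}. Define 𝓕(Y*,δ) = (1−δ)/2 + (1+δ)F(Y*)/2, where F is the CDF of Y. Then E[F(Y) | Y*, δ] = 𝓕(Y*, δ) almost surely. -/
/-!
On `{δ = 1}` the observation reveals `Y` itself. On `{δ = 0}` it reveals only `C = c < Y`; since
by independence the law of `(Y, C)` is the product `ν ⊗ κ` of the laws of `Y` and `C`, it suffices
that `E[F(Y); Y > c] = (1 + F(c))/2 · P(Y > c)`. Continuity of `F` means that `ν` has no atoms.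
Then for `Y, Y'` i.i.d. with law `ν` the events `{Y' ≤ Y, c < Y}` and `{Y ≤ Y', c < Y'}` have the
same probability `E[F(Y); Y > c]`, meet only on the null diagonal, and together make up
`{c < max Y Y'}`, of probability `1 - F(c)²`.
-/

open MeasureTheory ProbabilityTheory Set

namespace MeasureTheory

lemma Measure.prod_diagonal_eq_zero {α : Type*} [MeasurableSpace α] [MeasurableEq α]
    (μ ν : Measure α) [SFinite ν] [NullSingletonClass ν] :
    μ.prod ν (diagonal α) = 0 := by
  rw [Measure.prod_apply measurableSet_diagonal]
  simp [preimage, diagonal]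

lemma Measure.measureReal_prod_apply {α β : Type*} [MeasurableSpace α] [MeasurableSpace β]
    (μ : Measure α) (ν : Measure β) [SFinite μ] [IsFiniteMeasure ν]
    {s : Set (α × β)} (hs : MeasurableSet s) :
    (μ.prod ν).real s = ∫ x, ν.real (Prod.mk x ⁻¹' s) ∂μ := by
  rw [measureReal_def, Measure.prod_apply hs,
    ← integral_toReal (measurable_measure_prodMk_left hs).aemeasurable
      (ae_of_all _ fun _ => measure_lt_top _ _)]
  rfl

lemma measurableSet_snd_mem_snd_lt_fst {B : Set ℝ} (hB : MeasurableSet B) :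
    MeasurableSet {p : ℝ × ℝ | p.2 ∈ B ∧ p.2 < p.1} :=
  (measurable_snd hB).inter (measurableSet_lt measurable_snd measurable_fst)

lemma setIntegral_snd_mem_snd_lt_fst {E : Type*} [NormedAddCommGroup E] [NormedSpace ℝ E]
    (ν κ : Measure ℝ) [SFinite ν] [SFinite κ] {B : Set ℝ} (hB : MeasurableSet B)
    {f : ℝ × ℝ → E} (hf : Integrable f (ν.prod κ)) :
    ∫ p in {p | p.2 ∈ B ∧ p.2 < p.1}, f p ∂(ν.prod κ) = ∫ c in B, ∫ y in Ioi c, f (y, c) ∂ν ∂κ := by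
  have hS := measurableSet_snd_mem_snd_lt_fst hB
  rw [← integral_indicator hS, integral_prod_symm _ (hf.indicator hS), ← integral_indicator hB]
  congr 1 with c
  by_cases hc : c ∈ B
  · rw [indicator_of_mem hc, ← integral_indicator measurableSet_Ioi]
    congr 1 with y
    by_cases hy : c < y <;> simp [hc, hy]
  · simp [hc]

lemma setIntegral_Ioi_measureReal_Iic (ν : Measure ℝ) [IsFiniteMeasure ν] (c : ℝ) :
    ∫ y in Ioi c, ν.real (Iic y) ∂ν = (ν.prod ν).real {p | c < p.1 ∧ p.2 ≤ p.1} := by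
  have hA : MeasurableSet {p : ℝ × ℝ | c < p.1 ∧ p.2 ≤ p.1} :=
    (measurableSet_lt measurable_const measurable_fst).inter
      (measurableSet_le measurable_snd measurable_fst)
  rw [Measure.measureReal_prod_apply _ _ hA, ← integral_indicator measurableSet_Ioi]
  congr 1 with y
  by_cases hy : c < y <;> simp [hy, Iic]

lemma two_mul_measureReal_prod_lt_fst_snd_le_fst (ν : Measure ℝ) [IsProbabilityMeasure ν]
    [NullSingletonClass ν] (c : ℝ) :
    2 * (ν.prod ν).real {p | c < p.1 ∧ p.2 ≤ p.1} = 1 - ν.real (Iic c) ^ 2 := by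
  set A : Set (ℝ × ℝ) := {p | c < p.1 ∧ p.2 ≤ p.1}
  have hA : MeasurableSet A := (measurableSet_lt measurable_const measurable_fst).inter
    (measurableSet_le measurable_snd measurable_fst)
  have hunion : A ∪ Prod.swap ⁻¹' A = (Iic c ×ˢ Iic c)ᶜ := by
    ext ⟨y, z⟩
    simp only [A, mem_union, mem_preimage, mem_ofPred_eq, Prod.fst_swap, Prod.snd_swap,
      mem_compl_iff, mem_prod, mem_Iic, not_and_or, not_le]
    constructor
    · rintro (h | h) <;> tauto
    · rcases le_total z y with h | h <;> rintro (h' | h') <;>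
        first | exact Or.inl ⟨by linarith, h⟩ | exact Or.inr ⟨by linarith, h⟩
  have hinter : A ∩ Prod.swap ⁻¹' A ⊆ diagonal ℝ := fun p hp => le_antisymm hp.2.2 hp.1.2
  calc 2 * (ν.prod ν).real A
      = (ν.prod ν).real (A ∪ Prod.swap ⁻¹' A) + (ν.prod ν).real (A ∩ Prod.swap ⁻¹' A) := by
        rw [measureReal_union_add_inter (measurable_swap hA),
          Measure.measurePreserving_swap.measureReal_preimage hA.nullMeasurableSet]
        ring
    _ = 1 - ν.real (Iic c) ^ 2 := by
        rw [hunion, measureReal_mono_null hinter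
            (by simp [measureReal_def, Measure.prod_diagonal_eq_zero]),
          probReal_compl_eq_one_sub (measurableSet_Iic.prod measurableSet_Iic),
          measureReal_prod_prod]
        ring

lemma condExp_comp_ae_eq_of_forall_setIntegral_eq {Ω α β : Type*}
    [mΩ : MeasurableSpace Ω] [MeasurableSpace α] [MeasurableSpace β] {μ : Measure Ω}
    [IsFiniteMeasure μ] {X : Ω → α} {h : α → β} {f : α → ℝ} {g : β → ℝ}
    (hX : Measurable X) (hh : Measurable h) (hg : Measurable g)
    (hf : Integrable f (μ.map X)) (hgh : Integrable (g ∘ h) (μ.map X))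
    (heq : ∀ A, MeasurableSet A →
      ∫ x in h ⁻¹' A, g (h x) ∂(μ.map X) = ∫ x in h ⁻¹' A, f x ∂(μ.map X)) :
    μ[f ∘ X | MeasurableSpace.comap (h ∘ X) inferInstance] =ᵐ[μ] g ∘ h ∘ X := by
  have hm : MeasurableSpace.comap (h ∘ X) inferInstance ≤ mΩ := (hh.comp hX).comap_le
  refine (ae_eq_condExp_of_forall_setIntegral_eq hm (hf.comp_measurable hX)
    (fun s _ _ => (hgh.comp_measurable hX).integrableOn) ?_ ?_).symm
  · rintro _ ⟨A, hA, rfl⟩ -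
    have := heq A hA
    rwa [setIntegral_map (f := fun x => g (h x)) (hh hA) (hg.comp hh).aestronglyMeasurable
      hX.aemeasurable, setIntegral_map (hh hA) hf.aestronglyMeasurable hX.aemeasurable] at this
  · exact (hg.comp (comap_measurable (h ∘ X))).aestronglyMeasurable

end MeasureTheory

namespace ProbabilityTheory

lemma nullSingletonClass_of_continuous_cdf (ν : Measure ℝ) [IsProbabilityMeasure ν]
    (h : Continuous (cdf ν)) : NullSingletonClass ν where
  measure_singleton x := by
    rw [← measure_cdf ν, StieltjesFunction.measure_singleton,
      h.continuousWithinAt.leftLim_eq, sub_self, ENNReal.ofReal_zero]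

lemma integrable_cdf_comp {α : Type*} [MeasurableSpace α] (μ : Measure α) [IsFiniteMeasure μ]
    (ν : Measure ℝ) {X : α → ℝ} (hX : Measurable X) :
    Integrable (fun a => cdf ν (X a)) μ :=
  Integrable.of_bound ((cdf ν).mono.measurable.comp hX).aestronglyMeasurable 1
    (ae_of_all _ fun a => by
      rw [Real.norm_eq_abs, abs_of_nonneg (cdf_nonneg ν _)]
      exact cdf_le_one ν _)

lemma setIntegral_Ioi_cdf (ν : Measure ℝ) [IsProbabilityMeasure ν] (hν : Continuous (cdf ν))
    (c : ℝ) :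
    ∫ y in Ioi c, cdf ν y ∂ν = (1 + cdf ν c) / 2 * ν.real (Ioi c) := by
  have := nullSingletonClass_of_continuous_cdf ν hν
  have h := two_mul_measureReal_prod_lt_fst_snd_le_fst ν c
  rw [← setIntegral_Ioi_measureReal_Iic] at h
  have hIoi : ν.real (Ioi c) = 1 - ν.real (Iic c) := by
    rw [← compl_Iic, probReal_compl_eq_one_sub measurableSet_Iic]
  simp only [cdf_eq_real, hIoi]
  linear_combination h / 2

lemma setIntegral_cdf_fst_snd_mem_snd_lt_fst (ν κ : Measure ℝ) [IsProbabilityMeasure ν]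
    [IsFiniteMeasure κ] (hν : Continuous (cdf ν)) {B : Set ℝ} (hB : MeasurableSet B) :
    ∫ p in {p | p.2 ∈ B ∧ p.2 < p.1}, cdf ν p.1 ∂(ν.prod κ)
      = ∫ p in {p | p.2 ∈ B ∧ p.2 < p.1}, (1 + cdf ν p.2) / 2 ∂(ν.prod κ) := by
  rw [setIntegral_snd_mem_snd_lt_fst ν κ hB (integrable_cdf_comp _ ν measurable_fst),
    setIntegral_snd_mem_snd_lt_fst ν κ hB (f := fun p => (1 + cdf ν p.2) / 2)
      (((integrable_const 1).add (integrable_cdf_comp _ ν measurable_snd)).div_const 2)]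
  refine setIntegral_congr_fun hB fun c _ => ?_
  dsimp only
  rw [setIntegral_Ioi_cdf ν hν, setIntegral_const, smul_eq_mul, mul_comm]

end ProbabilityTheory

noncomputable def censoredObs (p : ℝ × ℝ) : ℝ × ℝ := (min p.1 p.2, if p.1 ≤ p.2 then 1 else 0)

-- The paper's `𝓕(Y*, δ)`, evaluated at `q = (Y*, δ)`.
noncomputable def imputedCDF (F : ℝ → ℝ) (q : ℝ × ℝ) : ℝ := (1 - q.2) / 2 + (1 + q.2) * F q.1 / 2

lemma censoredObs_of_le {p : ℝ × ℝ} (h : p.1 ≤ p.2) : censoredObs p = (p.1, 1) := by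
  simp [censoredObs, h]

lemma censoredObs_of_lt {p : ℝ × ℝ} (h : p.2 < p.1) : censoredObs p = (p.2, 0) := by
  simp [censoredObs, h.le, not_le.2 h]

lemma imputedCDF_one (F : ℝ → ℝ) (t : ℝ) : imputedCDF F (t, 1) = F t := by
  simp only [imputedCDF]; ring

lemma imputedCDF_zero (F : ℝ → ℝ) (t : ℝ) : imputedCDF F (t, 0) = (1 + F t) / 2 := by
  simp only [imputedCDF]; ring

lemma measurable_censoredObs : Measurable censoredObs :=
  (measurable_fst.min measurable_snd).prodMk
    (Measurable.ite (measurableSet_le measurable_fst measurable_snd) measurable_const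
      measurable_const)

lemma Measurable.imputedCDF {F : ℝ → ℝ} (hF : Measurable F) : Measurable (imputedCDF F) := by
  unfold _root_.imputedCDF
  fun_prop

lemma integrable_imputedCDF_censoredObs (P : Measure (ℝ × ℝ)) [IsFiniteMeasure P]
    (ν : Measure ℝ) [IsProbabilityMeasure ν] :
    Integrable (fun p => imputedCDF (cdf ν) (censoredObs p)) P := by
  refine Integrable.of_bound
    ((cdf ν).mono.measurable.imputedCDF.comp measurable_censoredObs).aestronglyMeasurable 1
    (ae_of_all _ fun p => ?_)
  rw [Real.norm_eq_abs, abs_le]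
  rcases le_or_gt p.1 p.2 with h | h
  · rw [censoredObs_of_le h, imputedCDF_one]
    exact ⟨by linarith [cdf_nonneg ν p.1], cdf_le_one ν p.1⟩
  · rw [censoredObs_of_lt h, imputedCDF_zero]
    constructor <;> linarith [cdf_nonneg ν p.2, cdf_le_one ν p.2]

lemma setIntegral_imputedCDF_censoredObs (ν κ : Measure ℝ) [IsProbabilityMeasure ν]
    [IsFiniteMeasure κ] (hν : Continuous (cdf ν)) {A : Set (ℝ × ℝ)} (hA : MeasurableSet A) :
    ∫ p in censoredObs ⁻¹' A, imputedCDF (cdf ν) (censoredObs p) ∂(ν.prod κ)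
      = ∫ p in censoredObs ⁻¹' A, cdf ν p.1 ∂(ν.prod κ) := by
  set D : Set (ℝ × ℝ) := {p | p.1 ≤ p.2}
  have hD : MeasurableSet D := measurableSet_le measurable_fst measurable_snd
  have hB : MeasurableSet ((fun t => (t, (0 : ℝ))) ⁻¹' A) := measurable_prodMk_right hA
  have hcensored : censoredObs ⁻¹' A \ D
      = {p | p.2 ∈ (fun t => (t, (0 : ℝ))) ⁻¹' A ∧ p.2 < p.1} := by
    ext p
    by_cases h : p.1 ≤ p.2
    · simp [D, h, not_lt.2 h]
    · simp [D, censoredObs_of_lt (not_le.1 h), not_le.1 h]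
  rw [← integral_inter_add_sdiff hD (integrable_imputedCDF_censoredObs _ ν).integrableOn,
    ← integral_inter_add_sdiff hD (integrable_cdf_comp _ ν measurable_fst).integrableOn,
    hcensored, setIntegral_cdf_fst_snd_mem_snd_lt_fst ν κ hν hB]
  congr 1
  · refine setIntegral_congr_fun ((measurable_censoredObs hA).inter hD) fun p hp => ?_
    rw [censoredObs_of_le hp.2, imputedCDF_one]
  · refine setIntegral_congr_fun (measurableSet_snd_mem_snd_lt_fst hB) fun p hp => ?_
    rw [censoredObs_of_lt hp.2, imputedCDF_zero]

theorem condexp_imputation_general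
    {Ω : Type*} [mΩ : MeasurableSpace Ω] (μ : Measure Ω) [IsProbabilityMeasure μ]
    (Y C : Ω → ℝ) (hY : Measurable Y) (hC : Measurable C)
    (F : ℝ → ℝ)
    (hF : ∀ y, F y = (μ {ω | Y ω ≤ y}).toReal)
    (hFc : Continuous F)
    (hindep : IndepFun Y C μ) :
    μ[(fun ω => F (Y ω)) |
        MeasurableSpace.comap
          (fun ω => (min (Y ω) (C ω), if Y ω ≤ C ω then (1 : ℝ) else 0)) inferInstance]
      =ᵐ[μ] fun ω =>
        (1 - (if Y ω ≤ C ω then (1 : ℝ) else 0)) / 2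
          + (1 + (if Y ω ≤ C ω then (1 : ℝ) else 0)) * F (min (Y ω) (C ω)) / 2 := by
  have : IsProbabilityMeasure (μ.map Y) := Measure.isProbabilityMeasure_map hY.aemeasurable
  have : IsProbabilityMeasure (μ.map C) := Measure.isProbabilityMeasure_map hC.aemeasurable
  have hcdf : ⇑(cdf (μ.map Y)) = F := by
    ext y
    rw [cdf_eq_real, measureReal_def, Measure.map_apply hY measurableSet_Iic, hF]
    rfl
  subst hcdf
  have hlaw : μ.map (fun ω => (Y ω, C ω)) = (μ.map Y).prod (μ.map C) :=
    (indepFun_iff_map_prod_eq_prod_map_map hY.aemeasurable hC.aemeasurable).1 hindep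
  refine condExp_comp_ae_eq_of_forall_setIntegral_eq (X := fun ω => (Y ω, C ω))
    (f := fun p => cdf (μ.map Y) p.1) (hY.prodMk hC) measurable_censoredObs
    (cdf (μ.map Y)).mono.measurable.imputedCDF ?_ ?_ fun A hA => ?_ <;> rw [hlaw]
  · exact integrable_cdf_comp _ _ measurable_fst
  · exact integrable_imputedCDF_censoredObs _ _
  · exact setIntegral_imputedCDF_censoredObs _ _ hFc hA

/-- For censored data `Y* = min(Y,C)`, `δ = 1{Y ≤ C}` with `Y ⊥ C`, both with continuous
CDFs, one has `E[F(Y) | Y*, δ] = (1-δ)/2 + (1+δ)F(Y*)/2` almost surely. -/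
theorem condexp_imputation
    {Ω : Type*} [mΩ : MeasurableSpace Ω] (μ : Measure Ω) [IsProbabilityMeasure μ]
    (Y C : Ω → ℝ) (hY : Measurable Y) (hC : Measurable C)
    (F G : ℝ → ℝ)
    (hF : ∀ y, F y = (μ {ω | Y ω ≤ y}).toReal)
    (hG : ∀ y, G y = (μ {ω | C ω ≤ y}).toReal)
    (hFc : Continuous F) (hGc : Continuous G)
    (hindep : IndepFun Y C μ) :
    μ[(fun ω => F (Y ω)) |
        MeasurableSpace.comap
          (fun ω => (min (Y ω) (C ω), if Y ω ≤ C ω then (1 : ℝ) else 0)) inferInstance]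
      =ᵐ[μ] fun ω =>
        (1 - (if Y ω ≤ C ω then (1 : ℝ) else 0)) / 2
          + (1 + (if Y ω ≤ C ω then (1 : ℝ) else 0)) * F (min (Y ω) (C ω)) / 2 :=
  condexp_imputation_general (mΩ := mΩ) μ Y C hY hC F hF hFc hindep
end

section
/- Under the setup of censored data with Y independent of C, both with continuous CDFs, and G(y) = P(C > y) > 0 on the support of Y, the identity E[(δ/G(Y*))·1{Y* ≤ y}] = F(y) holds for every y, where Y* = min(Y,C), δ = 1{Y ≤ C}, and F is the CDF of Y. -/
open MeasureTheory ProbabilityTheory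
open Set ENNReal

/-- A finite measure on ℝ with continuous CDF has no atoms. -/
lemma atom_zero (P : Measure ℝ) [IsFiniteMeasure P]
    (hc : Continuous (fun t => (P (Iic t)).toReal)) : ∀ t, P {t} = 0 := by
  intro t
  have key : ∀ ε > 0, (P {t}).toReal ≤ ε := by
    intro ε hε
    have hct : ContinuousAt (fun t => (P (Iic t)).toReal) t := hc.continuousAt
    rw [Metric.continuousAt_iff] at hct
    obtain ⟨δ, hδ, hball⟩ := hct ε hε
    set s := t - δ/2 with hs
    have hst : s < t := by simp [hs]; positivity
    have hdist : dist s t < δ := by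
      rw [Real.dist_eq, hs, abs_of_nonpos (by linarith)]; linarith
    have hsub : {t} ⊆ Iic t \ Iic s := by
      intro x hx; simp at hx; subst hx; exact ⟨mem_Iic.mpr le_rfl, by simpa using hst⟩
    have h1 : P {t} ≤ P (Iic t) - P (Iic s) := by
      calc P {t} ≤ P (Iic t \ Iic s) := measure_mono hsub
        _ = P (Iic t) - P (Iic s) := measure_diff (Iic_subset_Iic.mpr hst.le)
            measurableSet_Iic.nullMeasurableSet (measure_ne_top _ _)
    have h2 : (P {t}).toReal ≤ (P (Iic t)).toReal - (P (Iic s)).toReal := by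
      have h3 := ENNReal.toReal_mono
        (ne_of_lt (lt_of_le_of_lt tsub_le_self (measure_lt_top _ _))) h1
      rw [ENNReal.toReal_sub_of_le (measure_mono (Iic_subset_Iic.mpr hst.le))
        (measure_ne_top _ _)] at h3
      exact h3
    have h4 := hball hdist
    rw [Real.dist_eq] at h4
    have h5 := abs_lt.mp h4
    linarith [h5.1]
  have hz : (P {t}).toReal = 0 := by
    by_contra h
    have hpos : 0 < (P {t}).toReal :=
      lt_of_le_of_ne ENNReal.toReal_nonneg (Ne.symm h)
    linarith [key ((P {t}).toReal / 2) (by positivity)]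
  rwa [ENNReal.toReal_eq_zero_iff, or_iff_left (measure_ne_top _ _)] at hz

/-- The set where the upper tail vanishes is null. -/
lemma null_tail (P : Measure ℝ) [IsProbabilityMeasure P]
    (h0 : ∀ t, P {t} = 0) : P {t | P (Ioi t) = 0} = 0 := by
  set A := {t : ℝ | P (Ioi t) = 0} with hA
  rcases Set.eq_empty_or_nonempty A with h | ⟨a0, ha0⟩
  · simp [h]
  have hbdd : BddBelow A := by
    by_contra hb
    have hnull : ∀ n : ℕ, P (Ioi (-(n:ℝ))) = 0 := by
      intro n
      rw [not_bddBelow_iff] at hb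
      obtain ⟨a, ha, han⟩ := hb (-(n:ℝ))
      exact measure_mono_null (Ioi_subset_Ioi han.le) ha
    have : P univ = 0 := by
      have hu : (univ : Set ℝ) = ⋃ n : ℕ, Ioi (-(n:ℝ)) := by
        ext x; simp only [mem_univ, mem_iUnion, mem_Ioi, true_iff]
        obtain ⟨n, hn⟩ := exists_nat_gt (-x)
        exact ⟨n, by linarith⟩
      rw [hu]
      exact measure_iUnion_null fun n => hnull n
    simp [measure_univ] at this
  set b := sInf A with hb
  have hIoib : P (Ioi b) = 0 := by
    have hu : Ioi b = ⋃ n : ℕ, Ioi (b + 1/(n+1)) := by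
      ext x; simp only [mem_Ioi, mem_iUnion]
      constructor
      · intro hx
        obtain ⟨n, hn⟩ := exists_nat_one_div_lt (by linarith : 0 < x - b)
        exact ⟨n, by linarith⟩
      · rintro ⟨n, hn⟩
        have : (0:ℝ) < 1/(n+1) := by positivity
        linarith
    rw [hu]
    refine measure_iUnion_null fun n => ?_
    have : b < b + 1/(n+1) := by
      have : (0:ℝ) < 1/((n:ℝ)+1) := by positivity
      linarith
    obtain ⟨a, ha, halt⟩ := exists_lt_of_csInf_lt ⟨a0, ha0⟩ (hb ▸ this)
    exact measure_mono_null (Ioi_subset_Ioi halt.le) ha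
  have hsub : A ⊆ Ici b := fun a ha => csInf_le hbdd ha
  refine measure_mono_null hsub ?_
  have : Ici b = {b} ∪ Ioi b := by
    ext x; simp only [mem_Ici, mem_union, mem_singleton_iff, mem_Ioi]
    constructor
    · intro h; rcases eq_or_lt_of_le h with h | h; · exact Or.inl h.symm
      · exact Or.inr h
    · rintro (rfl | h); · exact le_refl _
      · exact h.le
  rw [this]
  exact measure_union_null (h0 b) hIoib

/-- Inverse-probability-of-censoring weighting identity:
`E[(δ/G(Y*))·1{Y* ≤ y}] = F(y)` where `Y* = min(Y,C)`, `δ = 1{Y ≤ C}`,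
`F` is the CDF of `Y`, `G(y) = P(C > y)` is positive wherever `F < 1`. -/
theorem ipcw_identity
    {Ω : Type*} [MeasurableSpace Ω] (μ : Measure Ω) [IsProbabilityMeasure μ]
    (Y C : Ω → ℝ) (hY : Measurable Y) (hC : Measurable C)
    (F FC G : ℝ → ℝ)
    (hF : ∀ y, F y = (μ {ω | Y ω ≤ y}).toReal)
    (hFC : ∀ y, FC y = (μ {ω | C ω ≤ y}).toReal)
    (hG : ∀ y, G y = (μ {ω | y < C ω}).toReal)
    (hFc : Continuous F) (hFCc : Continuous FC)
    (hindep : IndepFun Y C μ)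
    (hGpos : ∀ y, F y < 1 → 0 < G y) :
    ∀ y : ℝ,
      (∫ ω, (if Y ω ≤ C ω then (1 : ℝ) else 0) / G (min (Y ω) (C ω))
          * (if min (Y ω) (C ω) ≤ y then (1 : ℝ) else 0) ∂μ) = F y := by
  intro y
  set lam : Measure ℝ := μ.map Y with hlam
  set ν : Measure ℝ := μ.map C with hν
  haveI : IsProbabilityMeasure lam := Measure.isProbabilityMeasure_map hY.aemeasurable
  haveI : IsProbabilityMeasure ν := Measure.isProbabilityMeasure_map hC.aemeasurable
  -- basic identities
  have hlamIic : ∀ t, lam (Iic t) = ENNReal.ofReal (F t) := by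
    intro t
    rw [hlam, Measure.map_apply hY measurableSet_Iic, hF t,
      ENNReal.ofReal_toReal (measure_ne_top _ _)]
    rfl
  have hνIic : ∀ t, ν (Iic t) = ENNReal.ofReal (FC t) := by
    intro t
    rw [hν, Measure.map_apply hC measurableSet_Iic, hFC t,
      ENNReal.ofReal_toReal (measure_ne_top _ _)]
    rfl
  have hνIoi : ∀ t, ν (Ioi t) = ENNReal.ofReal (G t) := by
    intro t
    rw [hν, Measure.map_apply hC measurableSet_Ioi, hG t,
      ENNReal.ofReal_toReal (measure_ne_top _ _)]
    rfl
  have hGnn : ∀ t, 0 ≤ G t := fun t => (hG t) ▸ ENNReal.toReal_nonneg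
  -- G is antitone, hence measurable
  have hGanti : Antitone G := by
    intro s t hst
    rw [hG s, hG t]
    exact ENNReal.toReal_mono (measure_ne_top _ _)
      (measure_mono (fun ω h => lt_of_le_of_lt hst h))
  have hGmeas : Measurable G := hGanti.measurable
  -- no atoms
  have hlamAtom : ∀ t, lam {t} = 0 := by
    refine atom_zero lam ?_
    convert hFc using 2 with t
    rw [hlamIic t, ENNReal.toReal_ofReal (by rw [hF t]; exact ENNReal.toReal_nonneg)]
  have hνAtom : ∀ t, ν {t} = 0 := by
    refine atom_zero ν ?_
    convert hFCc using 2 with t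
    rw [hνIic t, ENNReal.toReal_ofReal (by rw [hFC t]; exact ENNReal.toReal_nonneg)]
  have hνIci : ∀ t, ν (Ici t) = ENNReal.ofReal (G t) := by
    intro t
    rw [← hνIoi t]
    refine le_antisymm ?_ (measure_mono Ioi_subset_Ici_self)
    calc ν (Ici t) = ν ({t} ∪ Ioi t) := by
          congr 1; ext x
          simp only [mem_Ici, mem_union, mem_singleton_iff, mem_Ioi]
          constructor
          · intro h; rcases eq_or_lt_of_le h with h | h
            exacts [Or.inl h.symm, Or.inr h]
          · rintro (rfl | h); exacts [le_rfl, h.le]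
      _ ≤ ν {t} + ν (Ioi t) := measure_union_le _ _
      _ = ν (Ioi t) := by rw [hνAtom t, zero_add]
  -- a.e. G > 0 under lam
  have hae : ∀ᵐ t ∂lam, G t ≠ 0 := by
    have hsub : {t : ℝ | G t = 0} ⊆ {t | lam (Ioi t) = 0} := by
      intro t ht
      simp only [mem_setOf_eq] at ht ⊢
      have hF1 : ¬ F t < 1 := fun h => absurd ht (ne_of_gt (hGpos t h))
      push_neg at hF1
      have hIic : lam (Iic t) = 1 := by
        refine le_antisymm prob_le_one ?_
        rw [hlamIic t]
        calc (1:ℝ≥0∞) = ENNReal.ofReal 1 := by simp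
          _ ≤ ENNReal.ofReal (F t) := ENNReal.ofReal_le_ofReal hF1
      rw [← Set.compl_Iic, measure_compl measurableSet_Iic (measure_ne_top _ _),
        hIic, measure_univ, tsub_self]
    rw [ae_iff]
    refine measure_mono_null (fun t ht => hsub ?_) (null_tail lam hlamAtom)
    simpa using ht
  -- define g on ℝ × ℝ
  set g : ℝ × ℝ → ℝ := fun p =>
    (if p.1 ≤ p.2 then (1:ℝ) else 0) / G (min p.1 p.2)
      * (if min p.1 p.2 ≤ y then (1:ℝ) else 0) with hg
  have hgmeas : Measurable g := by
    apply Measurable.mul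
    · apply Measurable.div
      · exact Measurable.ite (measurableSet_le measurable_fst measurable_snd) measurable_const measurable_const
      · exact hGmeas.comp (measurable_fst.min measurable_snd)
    · exact Measurable.ite
        ((measurable_fst.min measurable_snd) measurableSet_Iic) measurable_const
        measurable_const
  have hgnn : ∀ p, 0 ≤ g p := by
    intro p
    apply mul_nonneg
    · apply div_nonneg
      · split <;> norm_num
      · exact hGnn _
    · split <;> norm_num
  -- step 1: Bochner to lintegral
  have step1 : (∫ ω, (if Y ω ≤ C ω then (1 : ℝ) else 0) / G (min (Y ω) (C ω))
          * (if min (Y ω) (C ω) ≤ y then (1 : ℝ) else 0) ∂μ)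
      = (∫⁻ ω, ENNReal.ofReal (g (Y ω, C ω)) ∂μ).toReal := by
    rw [show (fun ω => (if Y ω ≤ C ω then (1 : ℝ) else 0) / G (min (Y ω) (C ω))
          * (if min (Y ω) (C ω) ≤ y then (1 : ℝ) else 0))
        = fun ω => g (Y ω, C ω) from rfl]
    exact integral_eq_lintegral_of_nonneg_ae
      (Filter.Eventually.of_forall fun ω => hgnn _)
      ((hgmeas.comp (hY.prodMk hC)).aestronglyMeasurable)
  -- step 2: push to product measure
  have hmap : μ.map (fun ω => (Y ω, C ω)) = lam.prod ν :=
    (indepFun_iff_map_prod_eq_prod_map_map hY.aemeasurable hC.aemeasurable).mp hindep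
  have step2 : (∫⁻ ω, ENNReal.ofReal (g (Y ω, C ω)) ∂μ)
      = ∫⁻ p, ENNReal.ofReal (g p) ∂(lam.prod ν) := by
    rw [← hmap, lintegral_map (by exact hgmeas.ennreal_ofReal) (hY.prodMk hC)]
  -- step 3: Fubini
  have step3 : (∫⁻ p, ENNReal.ofReal (g p) ∂(lam.prod ν))
      = ∫⁻ t, ∫⁻ c, ENNReal.ofReal (g (t, c)) ∂ν ∂lam :=
    lintegral_prod _ hgmeas.ennreal_ofReal.aemeasurable
  -- step 4: inner integral
  have step4 : ∀ t, (∫⁻ c, ENNReal.ofReal (g (t, c)) ∂ν)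
      = ENNReal.ofReal ((if t ≤ y then (1:ℝ) else 0) / G t) * ENNReal.ofReal (G t) := by
    intro t
    have hrw : ∀ c, ENNReal.ofReal (g (t, c))
        = (Ici t).indicator
            (fun _ => ENNReal.ofReal ((if t ≤ y then (1:ℝ) else 0) / G t)) c := by
      intro c
      by_cases h : t ≤ c
      · rw [indicator_of_mem (mem_Ici.mpr h)]
        simp only [hg, min_eq_left h, if_pos h]
        congr 1
        rw [mul_comm, mul_one_div]
      · rw [indicator_of_notMem (fun hc => h (mem_Ici.mp hc))]
        simp [hg, h]
    simp only [hrw]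
    rw [lintegral_indicator measurableSet_Ici, setLIntegral_const, hνIci t]
  -- step 5: outer integral
  have step5 : (∫⁻ t, ∫⁻ c, ENNReal.ofReal (g (t, c)) ∂ν ∂lam)
      = ENNReal.ofReal (F y) := by
    have hcong : ∀ᵐ t ∂lam,
        (∫⁻ c, ENNReal.ofReal (g (t, c)) ∂ν)
          = (Iic y).indicator (fun _ => (1:ℝ≥0∞)) t := by
      filter_upwards [hae] with t hGt
      rw [step4 t, ← ENNReal.ofReal_mul (div_nonneg (by split <;> norm_num) (hGnn t)),
        div_mul_cancel₀ _ hGt]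
      by_cases h : t ≤ y
      · rw [indicator_of_mem (mem_Iic.mpr h), if_pos h]; simp
      · rw [indicator_of_notMem (fun hc => h (mem_Iic.mp hc)), if_neg h]; simp
    rw [lintegral_congr_ae hcong, lintegral_indicator measurableSet_Iic,
      setLIntegral_const, one_mul, hlamIic y]
  rw [step1, step2, step3, step5,
    ENNReal.toReal_ofReal (by rw [hF y]; exact ENNReal.toReal_nonneg)]
end

section
/- Let Z_1,…,Z_n be i.i.d. real random variables and let F̂_n(y) = (1/n)Σ_{i=1}^n 1{Z_i ≤ y} be the empirical CDF and F the true CDF. Then for any ε > 0, P(sup_y |F̂_n(y) − F(y)| > ε) ≤ 2(n+1)exp(−2nε²). -/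
/-!
For a fixed `y`, the count `#{i | Z i ≤ y}` is a sum of independent Bernoulli(`F y`) variables,
so by Hoeffding it leaves `n * (F y ± ε)` with probability at most `exp (-2 n ε²)`. The count
takes only the values `k = 0, …, n`, so a deviation of the empirical CDF beyond `ε` means that
for some `k` there is a `y` with `n (F y + ε) < k ≤ #{i | Z i ≤ y}` (or the mirror event). For
fixed `k` these `y` form a down-set on which the events `k ≤ #{i | Z i ≤ y}` increase, so by
continuity from below the union over `y` is no likelier than the worst single `y`. A union bound
over the `2 (n + 1)` events finishes the proof.
-/

open MeasureTheory ProbabilityTheory Real Finset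
open scoped NNReal

section ContinuityFromBelow

variable {Ω ι : Type*} [MeasurableSpace Ω] {μ : Measure Ω} [IsFiniteMeasure μ] [LinearOrder ι]
  [TopologicalSpace ι] [OrderTopology ι] [SecondCountableTopology ι] {A : ι → Set Ω} {s : Set ι}
  {b : ℝ}

-- An order-connected `s` carries the order topology, so `atTop` on `s` is countably generated.
theorem Monotone.measureReal_biUnion_le_of_ordConnected (hA : Monotone A) [s.OrdConnected]
    (hb : 0 ≤ b) (h : ∀ y ∈ s, μ.real (A y) ≤ b) : μ.real (⋃ y ∈ s, A y) ≤ b := by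
  refine ENNReal.toReal_le_of_le_ofReal hb ?_
  have hA' : Monotone fun y : s ↦ A y := hA.comp (Subtype.mono_coe _)
  rw [Set.biUnion_eq_iUnion, hA'.measure_iUnion]
  exact iSup_le fun y ↦ (ENNReal.le_ofReal_iff_toReal_le (measure_ne_top μ _) hb).2 (h y y.2)

theorem Antitone.measureReal_biUnion_le_of_ordConnected (hA : Antitone A) [s.OrdConnected]
    (hb : 0 ≤ b) (h : ∀ y ∈ s, μ.real (A y) ≤ b) : μ.real (⋃ y ∈ s, A y) ≤ b := by
  refine ENNReal.toReal_le_of_le_ofReal hb ?_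
  have hA' : Antitone fun y : s ↦ A y := hA.comp_monotone (Subtype.mono_coe _)
  rw [Set.biUnion_eq_iUnion, hA'.measure_iUnion]
  exact iSup_le fun y ↦ (ENNReal.le_ofReal_iff_toReal_le (measure_ne_top μ _) hb).2 (h y y.2)

end ContinuityFromBelow

section Hoeffding

variable {Ω ι : Type*} [MeasurableSpace Ω] {μ : Measure Ω} [IsProbabilityMeasure μ] [Fintype ι]
  {X : ι → Ω → ℝ} {p ε : ℝ}

lemma hasSubgaussianMGF_sub_integral_of_mem_Icc_zero_one {Y : Ω → ℝ} (hY : AEMeasurable Y μ)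
    (hb : ∀ᵐ ω ∂μ, Y ω ∈ Set.Icc 0 1) : HasSubgaussianMGF (fun ω ↦ Y ω - μ[Y]) (1 / 4) μ := by
  convert hasSubgaussianMGF_of_mem_Icc hY hb
  ext; norm_num

lemma neg_sq_div_two_mul_sum_quarter (ε : ℝ) :
    -(Fintype.card ι * ε) ^ 2 / (2 * ((∑ _i : ι, (1 / 4 : ℝ≥0) : ℝ≥0) : ℝ))
      = -2 * Fintype.card ι * ε ^ 2 := by
  simp only [sum_const, card_univ, nsmul_eq_mul]
  push_cast
  rcases eq_or_ne (Fintype.card ι : ℝ) 0 with h | h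
  · simp [h]
  · field_simp
    ring

theorem measureReal_le_sum_le_of_mem_Icc_zero_one (hind : iIndepFun X μ)
    (hX : ∀ i, AEMeasurable (X i) μ) (hb : ∀ i, ∀ᵐ ω ∂μ, X i ω ∈ Set.Icc 0 1)
    (hp : ∀ i, μ[X i] = p) (hε : 0 ≤ ε) :
    μ.real {ω | Fintype.card ι * (p + ε) ≤ ∑ i, X i ω} ≤ exp (-2 * Fintype.card ι * ε ^ 2) := by
  have hY : iIndepFun (fun i ω ↦ X i ω - μ[X i]) μ :=
    (hind.comp (fun i (x : ℝ) ↦ x - μ[X i]) fun i ↦ by fun_prop :)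
  rw [← neg_sq_div_two_mul_sum_quarter]
  convert HasSubgaussianMGF.measure_sum_ge_le_of_iIndepFun hY
    (fun i _ ↦ hasSubgaussianMGF_sub_integral_of_mem_Icc_zero_one (hX i) (hb i))
    (by positivity : 0 ≤ Fintype.card ι * ε) using 2
  ext ω
  simp only [Set.mem_ofPred_eq, hp, sum_sub_distrib, sum_const, card_univ, nsmul_eq_mul]
  constructor <;> intro h <;> linarith

theorem measureReal_sum_le_le_of_mem_Icc_zero_one (hind : iIndepFun X μ)
    (hX : ∀ i, AEMeasurable (X i) μ) (hb : ∀ i, ∀ᵐ ω ∂μ, X i ω ∈ Set.Icc 0 1)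
    (hp : ∀ i, μ[X i] = p) (hε : 0 ≤ ε) :
    μ.real {ω | ∑ i, X i ω ≤ Fintype.card ι * (p - ε)} ≤ exp (-2 * Fintype.card ι * ε ^ 2) := by
  have hY : iIndepFun (fun i ω ↦ -(X i ω - μ[X i])) μ :=
    (hind.comp (fun i (x : ℝ) ↦ -(x - μ[X i])) fun i ↦ by fun_prop :)
  rw [← neg_sq_div_two_mul_sum_quarter]
  convert HasSubgaussianMGF.measure_sum_ge_le_of_iIndepFun hY
    (fun i _ ↦ (hasSubgaussianMGF_sub_integral_of_mem_Icc_zero_one (hX i) (hb i)).neg)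
    (by positivity : 0 ≤ Fintype.card ι * ε) using 2
  ext ω
  simp only [Set.mem_ofPred_eq, hp, sum_neg_distrib, sum_sub_distrib, sum_const, card_univ,
    nsmul_eq_mul]
  constructor <;> intro h <;> linarith

end Hoeffding

section EmpiricalCount

variable {Ω ι : Type*} [Fintype ι]

noncomputable def empiricalCount (Z : ι → Ω → ℝ) (y : ℝ) (ω : Ω) : ℝ :=
  ∑ i, if Z i ω ≤ y then 1 else 0

lemma empiricalCount_mono (Z : ι → Ω → ℝ) (ω : Ω) : Monotone fun y ↦ empiricalCount Z y ω := by
  intro a b hab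
  refine sum_le_sum fun i _ ↦ ?_
  by_cases ha : Z i ω ≤ a
  · simp [ha, ha.trans hab]
  · by_cases hb : Z i ω ≤ b <;> simp [ha, hb]

lemma empiricalCount_eq_card (Z : ι → Ω → ℝ) (y : ℝ) (ω : Ω) :
    empiricalCount Z y ω = #{i | Z i ω ≤ y} :=
  sum_boole _ _

lemma setOf_lt_iSup_abs_subset (hι : 0 < Fintype.card ι) (Z : ι → Ω → ℝ) (F : ℝ → ℝ) (ε : ℝ) :
    {ω | ε < ⨆ y, |1 / (Fintype.card ι : ℝ) * empiricalCount Z y ω - F y|}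
      ⊆ ⋃ k ∈ range (Fintype.card ι + 1),
        ({ω | ∃ y, Fintype.card ι * (F y + ε) < k ∧ k ≤ empiricalCount Z y ω}
          ∪ {ω | ∃ y, k < Fintype.card ι * (F y - ε) ∧ empiricalCount Z y ω ≤ k}) := by
  intro ω (hω : ε < _)
  obtain ⟨y, hy⟩ := exists_lt_of_lt_ciSup hω
  have hk : #{i | Z i ω ≤ y} < Fintype.card ι + 1 := Nat.lt_succ_of_le (card_filter_le _ _)
  refine Set.mem_iUnion₂.2 ⟨_, mem_range.2 hk, ?_⟩
  have hι' : (0 : ℝ) < Fintype.card ι := by exact_mod_cast hι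
  rw [empiricalCount_eq_card] at hy
  rcases lt_abs.1 hy with h | h
  · refine Or.inl ⟨y, ?_, (empiricalCount_eq_card Z y ω).ge⟩
    rw [lt_sub_iff_add_lt', one_div_mul_eq_div, lt_div_iff₀ hι'] at h
    linarith
  · refine Or.inr ⟨y, ?_, (empiricalCount_eq_card Z y ω).le⟩
    rw [neg_sub, lt_sub_iff_add_lt, one_div_mul_eq_div, ← lt_sub_iff_add_lt',
      div_lt_iff₀ hι'] at h
    linarith

lemma ite_le_mem_Icc (a y : ℝ) : (if a ≤ y then (1 : ℝ) else 0) ∈ Set.Icc 0 1 := by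
  by_cases h : a ≤ y <;> simp [h]

variable [MeasurableSpace Ω] {μ : Measure Ω}

lemma measurable_ite_le {Y : Ω → ℝ} (hY : Measurable Y) (y : ℝ) :
    Measurable fun ω ↦ if Y ω ≤ y then (1 : ℝ) else 0 :=
  Measurable.ite (hY measurableSet_Iic) measurable_const measurable_const

lemma integral_ite_le {Y : Ω → ℝ} (hY : Measurable Y) (y : ℝ) :
    μ[fun ω ↦ if Y ω ≤ y then (1 : ℝ) else 0] = μ.real {ω | Y ω ≤ y} := by
  have : (fun ω ↦ if Y ω ≤ y then (1 : ℝ) else 0) = (Y ⁻¹' Set.Iic y).indicator 1 := by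
    ext ω
    by_cases h : Y ω ≤ y <;> simp [h]
  rw [this, integral_indicator_one (hY measurableSet_Iic)]
  rfl

variable [IsProbabilityMeasure μ] {Z : ι → Ω → ℝ} {F : ℝ → ℝ} {ε : ℝ}

lemma measureReal_le_empiricalCount_le (hind : iIndepFun Z μ) (hZ : ∀ i, Measurable (Z i))
    {y p : ℝ} (hp : ∀ i, μ.real {ω | Z i ω ≤ y} = p)
    (hε : 0 ≤ ε) :
    μ.real {ω | Fintype.card ι * (p + ε) ≤ empiricalCount Z y ω}
      ≤ exp (-2 * Fintype.card ι * ε ^ 2) :=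
  measureReal_le_sum_le_of_mem_Icc_zero_one
    (hind.comp _ fun _ ↦ measurable_ite_le measurable_id y)
    (fun i ↦ (measurable_ite_le (hZ i) y).aemeasurable)
    (fun _ ↦ ae_of_all _ fun _ ↦ ite_le_mem_Icc _ y)
    (fun i ↦ (integral_ite_le (hZ i) y).trans (hp i)) hε

lemma measureReal_empiricalCount_le_le (hind : iIndepFun Z μ) (hZ : ∀ i, Measurable (Z i))
    {y p : ℝ} (hp : ∀ i, μ.real {ω | Z i ω ≤ y} = p)
    (hε : 0 ≤ ε) :
    μ.real {ω | empiricalCount Z y ω ≤ Fintype.card ι * (p - ε)}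
      ≤ exp (-2 * Fintype.card ι * ε ^ 2) :=
  measureReal_sum_le_le_of_mem_Icc_zero_one
    (hind.comp _ fun _ ↦ measurable_ite_le measurable_id y)
    (fun i ↦ (measurable_ite_le (hZ i) y).aemeasurable)
    (fun _ ↦ ae_of_all _ fun _ ↦ ite_le_mem_Icc _ y)
    (fun i ↦ (integral_ite_le (hZ i) y).trans (hp i)) hε

lemma measureReal_exists_le_empiricalCount_le (hind : iIndepFun Z μ) (hZ : ∀ i, Measurable (Z i))
    (hF : Monotone F) (hFZ : ∀ i y, μ.real {ω | Z i ω ≤ y} = F y) (hε : 0 ≤ ε) (k : ℝ) :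
    μ.real {ω | ∃ y, Fintype.card ι * (F y + ε) < k ∧ k ≤ empiricalCount Z y ω}
      ≤ exp (-2 * Fintype.card ι * ε ^ 2) := by
  have : {y | Fintype.card ι * (F y + ε) < k}.OrdConnected :=
    IsLowerSet.ordConnected fun a b hba (ha : _ < k) ↦
      show _ < k from lt_of_le_of_lt (by gcongr; exact hF hba) ha
  have hunion : {ω | ∃ y, Fintype.card ι * (F y + ε) < k ∧ k ≤ empiricalCount Z y ω}
      = ⋃ y ∈ {y | Fintype.card ι * (F y + ε) < k}, {ω | k ≤ empiricalCount Z y ω} := by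
    ext; simp
  rw [hunion]
  exact Monotone.measureReal_biUnion_le_of_ordConnected
    (fun a b hab ω hω ↦ le_trans hω (empiricalCount_mono Z ω hab)) (exp_nonneg _)
    fun y (hy : _ < k) ↦ le_trans (measureReal_mono fun ω (hω : k ≤ _) ↦ hy.le.trans hω)
      (measureReal_le_empiricalCount_le hind hZ (hFZ · y) hε)

lemma measureReal_exists_empiricalCount_le_le (hind : iIndepFun Z μ) (hZ : ∀ i, Measurable (Z i))
    (hF : Monotone F) (hFZ : ∀ i y, μ.real {ω | Z i ω ≤ y} = F y) (hε : 0 ≤ ε) (k : ℝ) :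
    μ.real {ω | ∃ y, k < Fintype.card ι * (F y - ε) ∧ empiricalCount Z y ω ≤ k}
      ≤ exp (-2 * Fintype.card ι * ε ^ 2) := by
  have : {y | k < Fintype.card ι * (F y - ε)}.OrdConnected :=
    IsUpperSet.ordConnected fun a b hab (ha : k < _) ↦
      show k < _ from lt_of_lt_of_le ha (by gcongr; exact hF hab)
  have hunion : {ω | ∃ y, k < Fintype.card ι * (F y - ε) ∧ empiricalCount Z y ω ≤ k}
      = ⋃ y ∈ {y | k < Fintype.card ι * (F y - ε)}, {ω | empiricalCount Z y ω ≤ k} := by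
    ext; simp
  rw [hunion]
  exact Antitone.measureReal_biUnion_le_of_ordConnected
    (fun a b hab ω hω ↦ le_trans (empiricalCount_mono Z ω hab) hω) (exp_nonneg _)
    fun y (hy : k < _) ↦ le_trans (measureReal_mono fun ω (hω : _ ≤ k) ↦ hω.trans hy.le)
      (measureReal_empiricalCount_le_le hind hZ (hFZ · y) hε)

theorem measureReal_lt_iSup_abs_empiricalCount_sub_le (hind : iIndepFun Z μ)
    (hZ : ∀ i, Measurable (Z i)) (hF : Monotone F) (hFZ : ∀ i y, μ.real {ω | Z i ω ≤ y} = F y)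
    (hι : 0 < Fintype.card ι) (hε : 0 ≤ ε) :
    μ.real {ω | ε < ⨆ y, |1 / (Fintype.card ι : ℝ) * empiricalCount Z y ω - F y|}
      ≤ 2 * (Fintype.card ι + 1) * exp (-2 * Fintype.card ι * ε ^ 2) := by
  calc _ ≤ ∑ k ∈ range (Fintype.card ι + 1),
        (μ.real {ω | ∃ y, Fintype.card ι * (F y + ε) < k ∧ k ≤ empiricalCount Z y ω}
          + μ.real {ω | ∃ y, k < Fintype.card ι * (F y - ε) ∧ empiricalCount Z y ω ≤ k}) :=
        (measureReal_mono (setOf_lt_iSup_abs_subset hι Z F ε) (measure_ne_top _ _)).trans <|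
          (measureReal_biUnion_finset_le _ _).trans <|
            sum_le_sum fun k _ ↦ measureReal_union_le _ _
    _ ≤ ∑ _k ∈ range (Fintype.card ι + 1), 2 * exp (-2 * Fintype.card ι * ε ^ 2) :=
        sum_le_sum fun k _ ↦ by
          rw [two_mul]
          exact add_le_add (measureReal_exists_le_empiricalCount_le hind hZ hF hFZ hε k)
            (measureReal_exists_empiricalCount_le_le hind hZ hF hFZ hε k)
    _ = _ := by
        rw [sum_const, card_range, nsmul_eq_mul]
        push_cast
        ring

end EmpiricalCount

/-- DKW-type bound with polynomial factor: for i.i.d. `Z_1,…,Z_n` with CDF `F` and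
empirical CDF `F̂_n`, `P(sup_y |F̂_n(y) - F(y)| > ε) ≤ 2(n+1)exp(-2nε²)`. -/
theorem dkw_type_bound
    {Ω : Type*} [MeasurableSpace Ω] (μ : Measure Ω) [IsProbabilityMeasure μ]
    (n : ℕ) (hn : 0 < n)
    (Z : Fin n → Ω → ℝ) (hZ : ∀ i, Measurable (Z i))
    (hindep : iIndepFun Z μ)
    (hident : ∀ i, μ.map (Z i) = μ.map (Z ⟨0, hn⟩))
    (F : ℝ → ℝ) (hF : ∀ y, F y = (μ {ω | Z ⟨0, hn⟩ ω ≤ y}).toReal)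
    (ε : ℝ) (hε : 0 < ε) :
    (μ {ω | ε < ⨆ y : ℝ,
        |(1 / (n : ℝ)) * (∑ i, if Z i ω ≤ y then (1 : ℝ) else 0) - F y|}).toReal
      ≤ 2 * ((n : ℝ) + 1) * Real.exp (-2 * (n : ℝ) * ε ^ 2) := by
  have hFZ : ∀ i y, μ.real {ω | Z i ω ≤ y} = F y := fun i y ↦ by
    rw [hF, ← measureReal_def]
    change μ.real (Z i ⁻¹' Set.Iic y) = μ.real (Z ⟨0, hn⟩ ⁻¹' Set.Iic y)
    rw [← map_measureReal_apply (hZ i) measurableSet_Iic, hident i,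
      map_measureReal_apply (hZ _) measurableSet_Iic]
  have hFmono : Monotone F := fun a b hab ↦ by
    simp only [← hFZ ⟨0, hn⟩]
    exact measureReal_mono fun ω (hω : _ ≤ a) ↦ hω.trans hab
  have := measureReal_lt_iSup_abs_empiricalCount_sub_le hindep hZ hFmono hFZ
    (by simpa using hn) hε.le
  rwa [Fintype.card_fin] at this
end

section
/- Under Condition 1 (signal gap Δ_E > 0 between a set E ⊇ D and its complement for the population quantities ω_k) and the uniform deviation bound P(max_k |ω̂_k − ω_k| > 3ε) ≤ 6p(n+1)exp(−2nε²), the sure screening property holds: P(D ⊆ Â) ≥ 1 − 6p(n+1)exp(−nΔ_E²/18), where Â is the top-d_n ranking set by |ω̂_k| with d_n ≥ |E|. -/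
open MeasureTheory

/-- Sure screening property: under the signal-gap condition on `E ⊇ D` and the uniform
deviation bound `P(max_k |ω̂_k - ω_k| > 3ε) ≤ 6p(n+1)exp(-2nε²)`, the top-`d_n` set `Â`
(by `|ω̂_k|`, with `d_n ≥ |E|`) satisfies
`P(D ⊆ Â) ≥ 1 - 6p(n+1)exp(-nΔ_E²/18)`. -/
theorem sure_screening_property
    {Ω : Type*} [MeasurableSpace Ω] (μ : Measure Ω) [IsProbabilityMeasure μ]
    {p : ℕ} (n dn : ℕ)
    (w : Fin p → ℝ) (what : Fin p → Ω → ℝ)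
    (E D : Finset (Fin p)) (hDE : D ⊆ E)
    (hE : E.Nonempty) (hEc : Eᶜ.Nonempty)
    (Δ : ℝ)
    (hΔ : Δ = E.inf' hE (fun k => |w k|) - Eᶜ.sup' hEc (fun k => |w k|))
    (hΔpos : 0 < Δ)
    (hdn : E.card ≤ dn)
    (hdev : ∀ ε : ℝ, 0 < ε →
      (μ {ω | ∃ k, 3 * ε < |what k ω - w k|}).toReal
        ≤ 6 * (p : ℝ) * ((n : ℝ) + 1) * Real.exp (-2 * (n : ℝ) * ε ^ 2))
    (Ahat : Ω → Finset (Fin p))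
    (hcard : ∀ ω, (Ahat ω).card = dn)
    (htop : ∀ ω, ∀ k ∈ Ahat ω, ∀ j ∉ Ahat ω, |what j ω| ≤ |what k ω|) :
    1 - 6 * (p : ℝ) * ((n : ℝ) + 1) * Real.exp (-(n : ℝ) * Δ ^ 2 / 18)
      ≤ (μ {ω | D ⊆ Ahat ω}).toReal := by

  -- deterministic separation lemma
  have key : ∀ ε : ℝ, 6 * ε < Δ → ∀ ω, (∀ k, |what k ω - w k| ≤ 3 * ε) →
      D ⊆ Ahat ω := by
    intro ε hε ω hω
    refine hDE.trans ?_
    by_contra hsub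
    obtain ⟨k, hkE, hkA⟩ := Finset.not_subset.mp hsub
    have hne : (Ahat ω \ E).Nonempty := by
      rw [Finset.sdiff_nonempty]
      intro hAE
      have h1 : (Ahat ω).card ≤ (E \ {k}).card := by
        apply Finset.card_le_card
        intro j hj
        rw [Finset.mem_sdiff, Finset.mem_singleton]
        exact ⟨hAE hj, fun h => hkA (h ▸ hj)⟩
      have h2 : (E \ {k}).card < E.card :=
        Finset.card_lt_card (Finset.sdiff_ssubset (Finset.singleton_subset_iff.mpr hkE)
          (Finset.singleton_nonempty k))
      have := hcard ω
      omega
    obtain ⟨j, hj⟩ := hne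
    rw [Finset.mem_sdiff] at hj
    have hjc : j ∈ Eᶜ := Finset.mem_compl.mpr hj.2
    have h1 : E.inf' hE (fun k => |w k|) ≤ |w k| := Finset.inf'_le _ hkE
    have h2 : |w j| ≤ Eᶜ.sup' hEc (fun k => |w k|) := Finset.le_sup' (fun k => |w k|) hjc
    have h3 : |what k ω| ≤ |what j ω| := htop ω j hj.1 k hkA
    have h4 := hω k
    have h5 := hω j
    have e1 : |w k| - |what k ω| ≤ |what k ω - w k| := by
      rw [abs_sub_comm]; exact abs_sub_abs_le_abs_sub _ _
    have e2 : |what j ω| - |w j| ≤ |what j ω - w j| := abs_sub_abs_le_abs_sub _ _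
    linarith
  -- probabilistic step for each ε ∈ (0, Δ/6)
  have step : ∀ ε : ℝ, 0 < ε → ε < Δ / 6 →
      1 - 6 * (p : ℝ) * ((n : ℝ) + 1) * Real.exp (-2 * (n : ℝ) * ε ^ 2)
        ≤ (μ {ω | D ⊆ Ahat ω}).toReal := by
    intro ε hε hε6
    have hcover : (Set.univ : Set Ω) ⊆
        {ω | D ⊆ Ahat ω} ∪ {ω | ∃ k, 3 * ε < |what k ω - w k|} := by
      intro ω _
      by_cases h : ∀ k, |what k ω - w k| ≤ 3 * ε
      · exact Or.inl (key ε (by linarith) ω h)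
      · push_neg at h
        obtain ⟨k, hk⟩ := h
        exact Or.inr ⟨k, hk⟩
    have h1 : (1 : ENNReal) ≤ μ {ω | D ⊆ Ahat ω} + μ {ω | ∃ k, 3 * ε < |what k ω - w k|} := by
      calc (1 : ENNReal) = μ Set.univ := (measure_univ).symm
        _ ≤ μ ({ω | D ⊆ Ahat ω} ∪ {ω | ∃ k, 3 * ε < |what k ω - w k|}) :=
            measure_mono hcover
        _ ≤ _ := measure_union_le _ _
    have hT : μ {ω | D ⊆ Ahat ω} ≠ ⊤ := measure_ne_top μ _
    have hS : μ {ω | ∃ k, 3 * ε < |what k ω - w k|} ≠ ⊤ := measure_ne_top μ _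
    have h2 : (1 : ℝ) ≤ (μ {ω | D ⊆ Ahat ω}).toReal +
        (μ {ω | ∃ k, 3 * ε < |what k ω - w k|}).toReal := by
      have := ENNReal.toReal_mono (by finiteness) h1
      rwa [ENNReal.toReal_one, ENNReal.toReal_add hT hS] at this
    have h3 := hdev ε hε
    linarith
  -- pass to the limit ε → Δ/6
  have hΔ6 : 0 < Δ / 6 := by linarith
  have hg : Filter.Tendsto
      (fun ε : ℝ => 1 - 6 * (p : ℝ) * ((n : ℝ) + 1) * Real.exp (-2 * (n : ℝ) * ε ^ 2))
      (nhdsWithin (Δ / 6) (Set.Iio (Δ / 6)))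
      (nhds (1 - 6 * (p : ℝ) * ((n : ℝ) + 1) * Real.exp (-2 * (n : ℝ) * (Δ / 6) ^ 2))) := by
    apply Filter.Tendsto.mono_left _ nhdsWithin_le_nhds
    exact (Continuous.tendsto (by continuity) _)
  have hev : ∀ᶠ ε in nhdsWithin (Δ / 6) (Set.Iio (Δ / 6)),
      (fun ε : ℝ => 1 - 6 * (p : ℝ) * ((n : ℝ) + 1) * Real.exp (-2 * (n : ℝ) * ε ^ 2)) ε
        ≤ (μ {ω | D ⊆ Ahat ω}).toReal := by
    filter_upwards [Ioo_mem_nhdsLT hΔ6] with ε hε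
    exact step ε hε.1 hε.2
  have hfin := le_of_tendsto hg hev
  have heq : -2 * (n : ℝ) * (Δ / 6) ^ 2 = -(n : ℝ) * Δ ^ 2 / 18 := by ring
  rwa [heq] at hfin
end
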